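/- With the same notation as the size estimate: for K_N^α(s) = (1/(4^α Γ(α))) Σ_{j=N₁}^{N₂} v_j (a_{j+1}^{2α} e^{-a_{j+1}²/(4s)} − a_j^{2α} e^{-a_j²/(4s)}) / s^{1+α}, the derivative satisfies |∂_s K_N^α(s)| ≤ C/s² for all s > 0, with C depending only on α and sup_j |v_j|, uniformly in N. -/

import Mathlib

/-!
Write `φ_p(x, t) = x ^ p * exp (-x ^ 2 / (4 t))` and
`D_p(t) = ∑ v_j (φ_p(a_{j+1}, t) - φ_p(a_j, t))`, so that the kernel is
`c_α D_{2α}(t) / t ^ (1 + α)`. Since `∂_t φ_p = φ_{p+2} / (4 t²)`, the quotient rule expresses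
`∂_t K` through `D_{2α+2}` and `D_{2α}` only. As `a` is increasing,
`|D_p(t)| ≤ sup |v| · ∫_0^∞ |∂_x φ_p(x, t)| dx`, and bounding `|∂_x φ_p|` by two Gaussian moments
shows this integral is `O(t ^ (p / 2))`. The powers of `s` then combine to `s⁻²`.
-/

open Real MeasureTheory Finset Set

theorem sum_abs_sub_le_integral_abs_deriv {f f' : ℝ → ℝ} {a : ℤ → ℝ} {c : ℝ} (S : Finset ℤ)
    (hf : ∀ x > c, HasDerivAt f (f' x) x) (hf' : IntegrableOn f' (Ioi c))
    (ha : Monotone a) (hac : ∀ j, c < a j) :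
    ∑ j ∈ S, |f (a (j + 1)) - f (a j)| ≤ ∫ x in Ioi c, |f' x| := by
  have hle (j : ℤ) : a j ≤ a (j + 1) := ha (Int.le_add_one le_rfl)
  have hsub (j : ℤ) : Ioc (a j) (a (j + 1)) ⊆ Ioi c := fun x hx => (hac j).trans hx.1
  have hterm (j : ℤ) : |f (a (j + 1)) - f (a j)| ≤ ∫ x in Ioc (a j) (a (j + 1)), |f' x| := by
    have hint : IntervalIntegrable f' volume (a j) (a (j + 1)) :=
      (intervalIntegrable_iff_integrableOn_Ioc_of_le (hle j)).2 (hf'.mono_set (hsub j))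
    rw [← intervalIntegral.integral_of_le (hle j),
      ← intervalIntegral.integral_eq_sub_of_hasDerivAt
        (fun x hx => hf x ((hac j).trans_le (uIcc_of_le (hle j) ▸ hx).1)) hint]
    exact intervalIntegral.abs_integral_le_integral_abs (hle j)
  have hdisj : Pairwise (Function.onFun Disjoint fun j => Ioc (a j) (a (j + 1))) := by
    simpa only [Order.succ_eq_add_one] using ha.pairwise_disjoint_on_Ioc_succ
  calc ∑ j ∈ S, |f (a (j + 1)) - f (a j)|
      ≤ ∑ j ∈ S, ∫ x in Ioc (a j) (a (j + 1)), |f' x| := sum_le_sum fun j _ => hterm j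
    _ = ∫ x in ⋃ j ∈ S, Ioc (a j) (a (j + 1)), |f' x| :=
      (integral_biUnion_finset S (fun _ _ => measurableSet_Ioc) (hdisj.set_pairwise _)
        fun j _ => (hf'.mono_set (hsub j)).abs).symm
    _ ≤ ∫ x in Ioi c, |f' x| :=
      setIntegral_mono_set hf'.abs (Filter.Eventually.of_forall fun x => abs_nonneg _)
        (iUnion₂_subset fun j _ => hsub j).eventuallyLE

noncomputable def heatWeight (p t x : ℝ) : ℝ := x ^ p * exp (-x ^ 2 / (4 * t))

noncomputable def gaussMoment (q : ℝ) : ℝ := 4 ^ ((q + 1) / 2) / 2 * Gamma ((q + 1) / 2)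

lemma heatWeight_nonneg (p t : ℝ) {x : ℝ} (hx : 0 ≤ x) : 0 ≤ heatWeight p t x :=
  mul_nonneg (rpow_nonneg hx p) (exp_pos _).le

lemma gaussMoment_pos {q : ℝ} (hq : -1 < q) : 0 < gaussMoment q := by
  have : 0 < (q + 1) / 2 := by linarith
  unfold gaussMoment
  positivity

noncomputable def heatWeightVarBound (p : ℝ) : ℝ :=
  p * gaussMoment (p - 1) + gaussMoment (p + 1) / 2

lemma heatWeightVarBound_pos {p : ℝ} (hp : 0 < p) : 0 < heatWeightVarBound p := by
  have := gaussMoment_pos (q := p - 1) (by linarith)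
  have := gaussMoment_pos (q := p + 1) (by linarith)
  unfold heatWeightVarBound
  positivity

lemma heatWeight_eq_rpow_mul_exp (p t : ℝ) :
    heatWeight p t = fun x => x ^ p * exp (-(1 / (4 * t)) * x ^ (2 : ℝ)) := by
  funext x
  rw [heatWeight, rpow_two]
  ring_nf

lemma integrableOn_heatWeight {q t : ℝ} (hq : -1 < q) (ht : 0 < t) :
    IntegrableOn (heatWeight q t) (Ioi 0) := by
  simpa only [heatWeight_eq_rpow_mul_exp, rpow_two] using
    integrableOn_rpow_mul_exp_neg_mul_sq (b := 1 / (4 * t)) (by positivity) hq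

lemma integral_heatWeight {q t : ℝ} (hq : -1 < q) (ht : 0 < t) :
    ∫ x in Ioi 0, heatWeight q t x = gaussMoment q * t ^ ((q + 1) / 2) := by
  rw [heatWeight_eq_rpow_mul_exp,
    integral_rpow_mul_exp_neg_mul_rpow two_pos hq (by positivity : (0 : ℝ) < 1 / (4 * t)),
    neg_div, rpow_neg (by positivity), one_div, inv_rpow (by positivity), inv_inv,
    mul_rpow (by norm_num) ht.le, gaussMoment]
  ring

lemma hasDerivAt_heatWeight {p t x : ℝ} (hx : 0 < x) :
    HasDerivAt (heatWeight p t)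
      (p * heatWeight (p - 1) t x - heatWeight (p + 1) t x / (2 * t)) x := by
  have h := (hasDerivAt_rpow_const (p := p) (Or.inl hx.ne')).mul
    (((hasDerivAt_pow 2 x).neg.div_const (4 * t)).exp)
  refine h.congr_deriv ?_
  unfold heatWeight
  rw [rpow_add_one hx.ne', Pi.neg_apply]
  field_simp
  ring

lemma hasDerivAt_heatWeight_time {p x t : ℝ} (hx : 0 < x) (ht : t ≠ 0) :
    HasDerivAt (fun t => heatWeight p t x) (heatWeight (p + 2) t x / (4 * t ^ 2)) t := by
  have h := (((hasDerivAt_inv ht).const_mul (-x ^ 2 / 4)).exp).const_mul (x ^ p)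
  have hfun : (fun t => heatWeight p t x) = fun t => x ^ p * exp (-x ^ 2 / 4 * t⁻¹) := by
    funext t
    unfold heatWeight
    ring_nf
  rw [hfun]
  refine h.congr_deriv ?_
  unfold heatWeight
  rw [rpow_add hx, rpow_two]
  field_simp

lemma integral_abs_deriv_heatWeight_le {p t : ℝ} (hp : 0 < p) (ht : 0 < t) :
    ∫ x in Ioi 0, |p * heatWeight (p - 1) t x - heatWeight (p + 1) t x / (2 * t)|
      ≤ heatWeightVarBound p * t ^ (p / 2) := by
  have hlo := integrableOn_heatWeight (q := p - 1) (by linarith) ht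
  have hhi := integrableOn_heatWeight (q := p + 1) (by linarith) ht
  calc ∫ x in Ioi 0, |p * heatWeight (p - 1) t x - heatWeight (p + 1) t x / (2 * t)|
      ≤ ∫ x in Ioi 0, (p * heatWeight (p - 1) t x + heatWeight (p + 1) t x / (2 * t)) := by
        refine setIntegral_mono_on ((hlo.const_mul p).sub (hhi.div_const _)).abs
          ((hlo.const_mul p).add (hhi.div_const _)) measurableSet_Ioi fun x hx => ?_
        have h₁ := heatWeight_nonneg (p - 1) t (le_of_lt hx)
        have h₂ := heatWeight_nonneg (p + 1) t (le_of_lt hx)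
        refine abs_sub_le_iff.2 ⟨?_, ?_⟩ <;> nlinarith [div_nonneg h₂ (by positivity : 0 ≤ 2 * t)]
    _ = heatWeightVarBound p * t ^ (p / 2) := by
      rw [integral_add (hlo.const_mul p) (hhi.div_const _), integral_const_mul, integral_div,
        integral_heatWeight (by linarith) ht, integral_heatWeight (by linarith) ht,
        show (p + 1 + 1) / 2 = p / 2 + 1 by ring, rpow_add_one ht.ne', heatWeightVarBound,
        show (p - 1 + 1) / 2 = p / 2 by ring]
      field_simp

theorem sum_abs_sub_heatWeight_le {p t : ℝ} {a : ℤ → ℝ} (hp : 0 < p) (ht : 0 < t)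
    (ha : Monotone a) (ha₀ : ∀ j, 0 < a j) (S : Finset ℤ) :
    ∑ j ∈ S, |heatWeight p t (a (j + 1)) - heatWeight p t (a j)|
      ≤ heatWeightVarBound p * t ^ (p / 2) :=
  (sum_abs_sub_le_integral_abs_deriv S (fun _ hx => hasDerivAt_heatWeight hx)
    (((integrableOn_heatWeight (by linarith) ht).const_mul p).sub
      ((integrableOn_heatWeight (by linarith) ht).div_const _)) ha ha₀).trans
    (integral_abs_deriv_heatWeight_le hp ht)

noncomputable def heatDiffSum (a v : ℤ → ℝ) (S : Finset ℤ) (p t : ℝ) : ℝ :=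
  ∑ j ∈ S, v j * (heatWeight p t (a (j + 1)) - heatWeight p t (a j))

theorem abs_heatDiffSum_le {p t V : ℝ} {a v : ℤ → ℝ} (hp : 0 < p) (ht : 0 < t)
    (ha : Monotone a) (ha₀ : ∀ j, 0 < a j) (hv : ∀ j, |v j| ≤ V) (S : Finset ℤ) :
    |heatDiffSum a v S p t| ≤ V * (heatWeightVarBound p * t ^ (p / 2)) := by
  have hV : 0 ≤ V := (abs_nonneg _).trans (hv 0)
  calc |heatDiffSum a v S p t|
      ≤ ∑ j ∈ S, |v j| * |heatWeight p t (a (j + 1)) - heatWeight p t (a j)| :=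
        (abs_sum_le_sum_abs _ _).trans_eq (sum_congr rfl fun j _ => abs_mul _ _)
    _ ≤ ∑ j ∈ S, V * |heatWeight p t (a (j + 1)) - heatWeight p t (a j)| :=
        sum_le_sum fun j _ => mul_le_mul_of_nonneg_right (hv j) (abs_nonneg _)
    _ ≤ V * (heatWeightVarBound p * t ^ (p / 2)) := by
        rw [← mul_sum]
        exact mul_le_mul_of_nonneg_left (sum_abs_sub_heatWeight_le hp ht ha ha₀ S) hV

theorem hasDerivAt_heatDiffSum {p t : ℝ} {a : ℤ → ℝ} (v : ℤ → ℝ) (S : Finset ℤ)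
    (ha₀ : ∀ j, 0 < a j) (ht : t ≠ 0) :
    HasDerivAt (heatDiffSum a v S p) (heatDiffSum a v S (p + 2) t / (4 * t ^ 2)) t := by
  have h := HasDerivAt.fun_sum (u := S) fun j _ =>
    ((hasDerivAt_heatWeight_time (p := p) (ha₀ (j + 1)) ht).sub
      (hasDerivAt_heatWeight_time (p := p) (ha₀ j) ht)).const_mul (v j)
  refine h.congr_deriv ?_
  simp only [heatDiffSum, sum_div, mul_div_assoc, sub_div]

noncomputable def diffTransformKernel (α : ℝ) (a v : ℤ → ℝ) (S : Finset ℤ) (t : ℝ) : ℝ :=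
  (1 / (4 ^ α * Gamma α)) *
    ∑ j ∈ S, v j * ((a (j + 1)) ^ (2 * α) * exp (-(a (j + 1)) ^ 2 / (4 * t)) -
      (a j) ^ (2 * α) * exp (-(a j) ^ 2 / (4 * t))) / t ^ (1 + α)

lemma diffTransformKernel_eq (α : ℝ) (a v : ℤ → ℝ) (S : Finset ℤ) :
    diffTransformKernel α a v S =
      fun t => 1 / (4 ^ α * Gamma α) * (heatDiffSum a v S (2 * α) t / t ^ (1 + α)) := by
  funext t
  simp only [diffTransformKernel, heatDiffSum, heatWeight, sum_div]

lemma hasDerivAt_diffTransformKernel {α s : ℝ} {a : ℤ → ℝ} (v : ℤ → ℝ) (S : Finset ℤ)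
    (ha₀ : ∀ j, 0 < a j) (hs : 0 < s) :
    HasDerivAt (diffTransformKernel α a v S)
      (1 / (4 ^ α * Gamma α) *
        ((heatDiffSum a v S (2 * α + 2) s / (4 * s ^ 2) * s ^ (1 + α) -
          heatDiffSum a v S (2 * α) s * ((1 + α) * s ^ α)) / (s ^ (1 + α)) ^ 2)) s := by
  have hpow : HasDerivAt (fun t => t ^ (1 + α)) ((1 + α) * s ^ α) s := by
    simpa using hasDerivAt_rpow_const (p := 1 + α) (Or.inl hs.ne')
  rw [diffTransformKernel_eq]
  exact ((hasDerivAt_heatDiffSum v S ha₀ hs.ne').div hpow (by positivity)).const_mul _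

-- `s * r` stands for `s ^ (1 + α)`, with `r = s ^ α`.
lemma abs_quotient_rule_le {s r D D' B B' k : ℝ} (hs : 0 < s) (hr : 0 < r) (hk : 0 ≤ k)
    (hD : |D| ≤ B * r) (hD' : |D'| ≤ B' * r / s) :
    |(D' * (s * r) - D * (k * r)) / (s * r) ^ 2| ≤ (B' + k * B) / s ^ 2 := by
  rw [abs_div, abs_of_pos (by positivity : (0 : ℝ) < (s * r) ^ 2),
    div_le_div_iff₀ (by positivity) (by positivity)]
  have hD's : |D'| * s ≤ B' * r := by rwa [le_div_iff₀ hs] at hD'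
  calc |D' * (s * r) - D * (k * r)| * s ^ 2 ≤ (|D'| * s * r + |D| * k * r) * s ^ 2 := by
        gcongr
        refine (abs_sub _ _).trans (le_of_eq ?_)
        simp only [abs_mul, abs_of_pos hs, abs_of_pos hr, abs_of_nonneg hk]
        ring
    _ ≤ (B' * r * r + B * r * k * r) * s ^ 2 := by gcongr
    _ = (B' + k * B) * (s * r) ^ 2 := by ring

theorem abs_deriv_diffTransformKernel_le {α s V : ℝ} {a v : ℤ → ℝ} (hα : 0 < α)
    (ha : Monotone a) (ha₀ : ∀ j, 0 < a j) (hv : ∀ j, |v j| ≤ V) (S : Finset ℤ) (hs : 0 < s) :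
    |deriv (diffTransformKernel α a v S) s| ≤
      1 / (4 ^ α * Gamma α) * V *
        (heatWeightVarBound (2 * α + 2) / 4 + (1 + α) * heatWeightVarBound (2 * α)) / s ^ 2 := by
  have hlo := abs_heatDiffSum_le (p := 2 * α) (by linarith) hs ha ha₀ hv S
  have hhi := abs_heatDiffSum_le (p := 2 * α + 2) (by linarith) hs ha ha₀ hv S
  rw [show 2 * α / 2 = α by ring, ← mul_assoc] at hlo
  rw [show (2 * α + 2) / 2 = α + 1 by ring, rpow_add_one hs.ne'] at hhi
  have hhi' : |heatDiffSum a v S (2 * α + 2) s / (4 * s ^ 2)|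
      ≤ V * heatWeightVarBound (2 * α + 2) / 4 * s ^ α / s := by
    rw [abs_div, abs_of_pos (by positivity : (0 : ℝ) < 4 * s ^ 2), div_le_iff₀ (by positivity)]
    refine hhi.trans (le_of_eq ?_)
    field_simp
  rw [(hasDerivAt_diffTransformKernel v S ha₀ hs).deriv, abs_mul,
    abs_of_pos (by have := Gamma_pos_of_pos hα; positivity), mul_assoc, mul_div_assoc,
    rpow_add hs, rpow_one]
  gcongr
  refine (abs_quotient_rule_le hs (by positivity) (by linarith) hlo hhi').trans (le_of_eq ?_)
  ring

theorem stmt_7 (α V : ℝ) (hα0 : 0 < α) (hV : 0 < V) :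
    ∃ C > 0, ∀ (a v : ℤ → ℝ), (∀ j, 0 < a j) → StrictMono a →
      (∀ j, |v j| ≤ V) → ∀ N₁ N₂ : ℤ, N₁ < N₂ → ∀ s > (0:ℝ),
      |deriv (fun t : ℝ =>
          (1 / (4 ^ α * Real.Gamma α)) *
            ∑ j ∈ Finset.Icc N₁ N₂,
              v j * ((a (j + 1)) ^ (2 * α) * Real.exp (-(a (j + 1)) ^ 2 / (4 * t)) -
                     (a j) ^ (2 * α) * Real.exp (-(a j) ^ 2 / (4 * t))) / t ^ (1 + α)) s|
        ≤ C / s ^ 2 := by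
  have hΓ := Gamma_pos_of_pos hα0
  have hB := heatWeightVarBound_pos (p := 2 * α) (by linarith)
  have hB₂ := heatWeightVarBound_pos (p := 2 * α + 2) (by linarith)
  refine ⟨1 / (4 ^ α * Gamma α) * V *
    (heatWeightVarBound (2 * α + 2) / 4 + (1 + α) * heatWeightVarBound (2 * α)), by positivity,
    fun a v ha₀ ha hv N₁ N₂ _ s hs => ?_⟩
  exact abs_deriv_diffTransformKernel_le hα0 ha.monotone ha₀ hv (Icc N₁ N₂) hs
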